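/- For any abstract probabilistic timed automaton A and any abstraction function α on its locations, A weakly refines its abstraction: A ≼_W α(P_α(A)). -/
import Mathlib


/- ----------------------------------------------------------------------
   Common definitions: (abstract) probabilistic timed automata, region
   automata, satisfaction, refinement, divergence, pruning, abstraction,
   event-clock automata, conjunction and parallel composition.

   Guards (clock constraints) are represented semantically, as sets of
   clock valuations; probability constraints are represented by their
   satisfaction sets (the paper does not fix a constraint language).
   Regions are taken at the finest granularity (one valuation per
   region), so the region construction yields the (time-abstract)
   semantics of the automaton; the reset function ζ of a region label
   is merged into the target distribution (a PA over the alphabet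
   Θ(X) × A × (2^X)^S is represented by the structure `RPA` below,
   whose transitions carry a region label and a distribution over
   reset-set/state pairs).
   ---------------------------------------------------------------------- -/

open scoped Classical
open scoped NNReal ENNReal

noncomputable section

/-- Clock valuations over the clock set `X`. -/
abbrev Val (X : Type) := X → ℝ≥0

def valZero (X : Type) : Val X := fun _ => 0

/-- Letting time `t` elapse. -/
def valShift {X : Type} (v : Val X) (t : ℝ≥0) : Val X := fun x => v x + t

/-- Resetting the clocks in `Y` to zero. -/
def valReset {X : Type} (v : Val X) (Y : Set X) : Val X :=
  fun x => if x ∈ Y then 0 else v x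

/-- Clock constraints (guards) over `X`, represented semantically. -/
abbrev Guard (X : Type) := Set (Val X)

/-- The computed negation of a guard: a set of guards whose joint
complement is the guard. -/
def Guard.negSet {X : Type} (g : Guard X) : Set (Guard X) := {gᶜ}

/-- The three-valued complete lattice `⊥ < ? < ⊤` of modalities. -/
inductive B3 : Type
  | bot
  | may
  | must
deriving DecidableEq

/-- Probabilistic timed automata. -/
structure PTA (L A X AP : Type) where
  V : L → Set AP
  T : L → Guard X → A → PMF (Set X × L) → Prop
  init : L

/-- Abstract probabilistic timed automata: sets of admissible atomic
propositions, three-valued edges, probability constraints (represented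
by their sets of satisfying distributions). -/
structure APTA (L A X AP : Type) where
  V : L → Set (Set AP)
  T : L → Guard X → A → Set (PMF (Set X × L)) → B3
  init : L

/-- Probabilistic automata over the alphabet `Θ(X) × A × (2^X)^S`,
with the reset function of each label merged into the transition's
distribution (which therefore ranges over reset-set/state pairs). -/
structure RPA (S A X AP : Type) where
  V : S → Set AP
  T : S → Val X → A → PMF (Set X × S) → Prop
  init : S

/-- Abstract probabilistic automata over the alphabet
`Θ(X) × A × (2^X)^S` (see `RPA`). -/
structure RAPA (S A X AP : Type) where
  V : S → Set (Set AP)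
  T : S → Val X → A → Set (PMF (Set X × S)) → B3
  init : S

/-! ### Region construction -/

/-- Region automaton of a PTA, before restricting to reachable states. -/
def PTA.regionPre {L A X AP : Type} (M : PTA L A X AP) : RPA (L × Val X) A X AP where
  init := (M.init, valZero X)
  V := fun s => M.V s.1
  T := fun s v a μ' => ∃ g μ t, M.T s.1 g a μ ∧ v = valShift s.2 t ∧ v ∈ g ∧
        μ' = μ.map (fun p => (p.1, (p.2, valReset v p.1)))

/-- Reachability in an `RPA`. -/
inductive RPA.Reach {S A X AP : Type} (P : RPA S A X AP) : S → Prop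
  | init : RPA.Reach P P.init
  | step {s : S} {v : Val X} {a : A} {μ : PMF (Set X × S)} {Y : Set X} {s' : S} :
      RPA.Reach P s → P.T s v a μ → μ (Y, s') ≠ 0 → RPA.Reach P s'

/-- The region PA `R(M)` of a PTA `M` (transitions restricted to
reachable sources). -/
def PTA.region {L A X AP : Type} (M : PTA L A X AP) : RPA (L × Val X) A X AP where
  init := M.regionPre.init
  V := M.regionPre.V
  T := fun s v a μ => M.regionPre.Reach s ∧ M.regionPre.T s v a μ

/-- Lifting a probability constraint over `2^X × L` to region states. -/
def liftConstraint {X L : Type} (v : Val X) (φ : Set (PMF (Set X × L))) :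
    Set (PMF (Set X × (L × Val X))) :=
  (fun μ => μ.map (fun p => (p.1, (p.2, valReset v p.1)))) '' φ

/-- Region APA of an APTA, before restricting to reachable states. -/
def APTA.regionPre {L A X AP : Type} (𝒜 : APTA L A X AP) : RAPA (L × Val X) A X AP where
  init := (𝒜.init, valZero X)
  V := fun s => 𝒜.V s.1
  T := fun s v a φ' =>
    if ∃ g φ t, 𝒜.T s.1 g a φ = B3.must ∧ v = valShift s.2 t ∧ v ∈ g ∧
        φ' = liftConstraint v φ then B3.must
    else if ∃ g φ t, 𝒜.T s.1 g a φ ≠ B3.bot ∧ v = valShift s.2 t ∧ v ∈ g ∧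
        φ' = liftConstraint v φ then B3.may
    else B3.bot

/-- Reachability in an `RAPA`. -/
inductive RAPA.Reach {S A X AP : Type} (N : RAPA S A X AP) : S → Prop
  | init : RAPA.Reach N N.init
  | step {s : S} {v : Val X} {a : A} {φ : Set (PMF (Set X × S))} {μ : PMF (Set X × S)}
      {Y : Set X} {s' : S} :
      RAPA.Reach N s → N.T s v a φ ≠ B3.bot → μ ∈ φ → μ (Y, s') ≠ 0 → RAPA.Reach N s'

/-- The region APA `R(𝒜)` of an APTA `𝒜`. -/
def APTA.region {L A X AP : Type} (𝒜 : APTA L A X AP) : RAPA (L × Val X) A X AP where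
  init := 𝒜.regionPre.init
  V := 𝒜.regionPre.V
  T := fun s v a φ => if 𝒜.regionPre.Reach s then 𝒜.regionPre.T s v a φ else B3.bot

/-- The operator `𝒯` interpreting a PA over the alphabet
`Θ(X) × A × (2^X)^S` as a PTA. -/
def RPA.toPTA {S A X AP : Type} (P : RPA S A X AP) : PTA S A X AP where
  init := P.init
  V := P.V
  T := fun s g a μ => ∃ v, g = {v} ∧ P.T s v a μ

/-! ### Normal form -/

/-- The PTA `(𝒯 ∘ R)(M)` (fused). -/
def PTA.nf {L A X AP : Type} (M : PTA L A X AP) : PTA (L × Val X) A X AP where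
  init := (M.init, valZero X)
  V := fun s => M.V s.1
  T := fun s g a μ' => ∃ g₀ μ t, M.T s.1 g₀ a μ ∧ valShift s.2 t ∈ g₀ ∧
        g = {valShift s.2 t} ∧
        μ' = μ.map (fun p => (p.1, (p.2, valReset (valShift s.2 t) p.1)))

/-- Reachability of locations in a PTA. -/
inductive PTA.ReachLoc {L A X AP : Type} (M : PTA L A X AP) : L → Prop
  | init : PTA.ReachLoc M M.init
  | step {l : L} {g : Guard X} {a : A} {μ : PMF (Set X × L)} {Y : Set X} {l' : L} :
      PTA.ReachLoc M l → M.T l g a μ → μ (Y, l') ≠ 0 → PTA.ReachLoc M l'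

/-- A PTA is in normal form iff it is isomorphic to the reachable part
of `(𝒯 ∘ R)(M)`. -/
def PTA.NormalForm {L A X AP : Type} (M : PTA L A X AP) : Prop :=
  ∃ e : L → L × Val X, Function.Injective e ∧
    (∀ s, M.nf.ReachLoc s ↔ s ∈ Set.range e) ∧
    e M.init = M.nf.init ∧
    (∀ l, M.V l = M.nf.V (e l)) ∧
    (∀ l g a μ, M.T l g a μ ↔ M.nf.T (e l) g a (μ.map (Prod.map id e)))

/-! ### The lifting `⋐_R` of a relation to distributions -/

/-- `μ ⋐_R μ'`: lifting of `R` to distributions over reset-set/state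
pairs, via a correspondence (weight) function. -/
def distLift {X S S' : Type} (R : S → S' → Prop)
    (μ : PMF (Set X × S)) (μ' : PMF (Set X × S')) : Prop :=
  ∃ δ : Set X × S → Set X × S' → ℝ≥0∞,
    (∀ p, μ p ≠ 0 → ∑' q, δ p q = 1) ∧
    (∀ q, μ' q = ∑' p, μ p * δ p q) ∧
    (∀ p q, δ p q ≠ 0 → p.1 = q.1 ∧ R p.2 q.2)

/-- Lifting with a fixed correspondence function (used for strong
refinement). -/
def distLiftVia {X S S' : Type} (R : S → S' → Prop)
    (δ : Set X × S → Set X × S' → ℝ≥0∞)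
    (μ : PMF (Set X × S)) (μ' : PMF (Set X × S')) : Prop :=
  (∀ q, μ' q = ∑' p, μ p * δ p q) ∧
  (∀ p q, δ p q ≠ 0 → p.1 = q.1 ∧ R p.2 q.2)

/-! ### APA satisfaction and refinement (at the region level) -/

/-- Satisfaction relation between a PA and an APA. -/
def RPA.SatRel {S S' A X AP : Type} (M : RPA S A X AP) (N : RAPA S' A X AP)
    (R : S → S' → Prop) : Prop :=
  ∀ s s', R s s' →
    ((∀ v a φ', N.T s' v a φ' = B3.must →
        ∃ μ, M.T s v a μ ∧ ∃ μ' ∈ φ', distLift R μ μ') ∧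
     (∀ v a μ, M.T s v a μ →
        ∃ φ', N.T s' v a φ' ≠ B3.bot ∧ ∃ μ' ∈ φ', distLift R μ μ') ∧
     M.V s ∈ N.V s')

/-- `M ⊨ N` for a PA `M` and an APA `N`. -/
def RPA.Sat {S S' A X AP : Type} (M : RPA S A X AP) (N : RAPA S' A X AP) : Prop :=
  ∃ R, M.SatRel N R ∧ R M.init N.init

/-- Weak refinement relation between APAs. -/
def RAPA.WeakRefRel {S1 S2 A X AP : Type} (N1 : RAPA S1 A X AP) (N2 : RAPA S2 A X AP)
    (R : S1 → S2 → Prop) : Prop :=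
  ∀ s1 s2, R s1 s2 →
    ((∀ v a φ2, N2.T s2 v a φ2 = B3.must →
        ∃ φ1, N1.T s1 v a φ1 = B3.must ∧ ∀ μ1 ∈ φ1, ∃ μ2 ∈ φ2, distLift R μ1 μ2) ∧
     (∀ v a φ1, N1.T s1 v a φ1 ≠ B3.bot →
        ∃ φ2, N2.T s2 v a φ2 ≠ B3.bot ∧ ∀ μ1 ∈ φ1, ∃ μ2 ∈ φ2, distLift R μ1 μ2) ∧
     N1.V s1 ⊆ N2.V s2)

/-- Weak refinement `N1 ≼_W N2` of APAs. -/
def RAPA.WeakRef {S1 S2 A X AP : Type} (N1 : RAPA S1 A X AP) (N2 : RAPA S2 A X AP) : Prop :=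
  ∃ R, N1.WeakRefRel N2 R ∧ R N1.init N2.init

/-- Strong refinement relation between APAs: the correspondence
function is fixed per pair of transitions, uniformly over all
distributions. -/
def RAPA.StrongRefRel {S1 S2 A X AP : Type} (N1 : RAPA S1 A X AP) (N2 : RAPA S2 A X AP)
    (R : S1 → S2 → Prop) : Prop :=
  ∀ s1 s2, R s1 s2 →
    ((∀ v a φ2, N2.T s2 v a φ2 = B3.must →
        ∃ φ1, N1.T s1 v a φ1 = B3.must ∧
          ∃ δ, (∀ p, ∑' q, δ p q = 1) ∧
            ∀ μ1 ∈ φ1, ∃ μ2 ∈ φ2, distLiftVia R δ μ1 μ2) ∧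
     (∀ v a φ1, N1.T s1 v a φ1 ≠ B3.bot →
        ∃ φ2, N2.T s2 v a φ2 ≠ B3.bot ∧
          ∃ δ, (∀ p, ∑' q, δ p q = 1) ∧
            ∀ μ1 ∈ φ1, ∃ μ2 ∈ φ2, distLiftVia R δ μ1 μ2) ∧
     N1.V s1 ⊆ N2.V s2)

/-- Strong refinement `N1 ≼_S N2` of APAs. -/
def RAPA.StrongRef {S1 S2 A X AP : Type} (N1 : RAPA S1 A X AP) (N2 : RAPA S2 A X AP) : Prop :=
  ∃ R, N1.StrongRefRel N2 R ∧ R N1.init N2.init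

/-- Mutual weak refinement `≡`. -/
def RAPA.Equiv {S1 S2 A X AP : Type} (N1 : RAPA S1 A X AP) (N2 : RAPA S2 A X AP) : Prop :=
  N1.WeakRef N2 ∧ N2.WeakRef N1

/-! ### APTA satisfaction and refinements -/

/-- Satisfaction relation between a PTA in normal form and an APTA
(Def. "APTA Satisfaction"). -/
def APTA.SatRel {L L' A X AP : Type} (M : PTA L A X AP) (𝒜 : APTA L' A X AP)
    (R : L → L' → Prop) : Prop :=
  ∀ l l', R l l' →
    ((∀ (a : A) (φ' : Set (PMF (Set X × L'))) (g : Guard X) (θ : Val X),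
        𝒜.T l' g a φ' = B3.must →
        M.regionPre.Reach (l, θ) → 𝒜.regionPre.Reach (l', θ) →
        ∃ (n : ℕ) (gs : Fin n → Guard X) (μs : Fin n → PMF (Set X × L)),
          (∀ t : ℝ≥0, valShift θ t ∈ g → ∃ i, valShift θ t ∈ gs i) ∧
          (∀ i, M.T l (gs i) a (μs i) ∧ ∃ μ' ∈ φ', distLift R (μs i) μ')) ∧
     (∀ (a : A) (μ : PMF (Set X × L)) (g : Guard X),
        M.T l g a μ →
        ∃ (g' : Guard X) (φ' : Set (PMF (Set X × L'))),
          𝒜.T l' g' a φ' ≠ B3.bot ∧ g ⊆ g' ∧ ∃ μ' ∈ φ', distLift R μ μ') ∧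
     M.V l ∈ 𝒜.V l')

/-- `M ⊨ 𝒜` for a PTA `M` and an APTA `𝒜`. -/
def APTA.Sat {L L' A X AP : Type} (M : PTA L A X AP) (𝒜 : APTA L' A X AP) : Prop :=
  ∃ R, APTA.SatRel M 𝒜 R ∧ R M.init 𝒜.init

/-- An implementation of an APTA is a PTA in normal form satisfying it. -/
def APTA.Implements {L L' A X AP : Type} (M : PTA L A X AP) (𝒜 : APTA L' A X AP) : Prop :=
  M.NormalForm ∧ APTA.Sat M 𝒜

/-- Thorough refinement `𝒜1 ≼_T 𝒜2`: inclusion of implementation sets. -/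
def APTA.Thorough {L1 L2 A X AP : Type} (𝒜1 : APTA L1 A X AP) (𝒜2 : APTA L2 A X AP) : Prop :=
  ∀ (L' : Type) (M : PTA L' A X AP), APTA.Implements M 𝒜1 → APTA.Implements M 𝒜2

/-- Weak refinement `𝒜1 ≼_W 𝒜2` of APTAs: weak refinement of the region APAs. -/
def APTA.WeakRef {L1 L2 A X AP : Type} (𝒜1 : APTA L1 A X AP) (𝒜2 : APTA L2 A X AP) : Prop :=
  RAPA.WeakRef 𝒜1.region 𝒜2.region

/-- Strong refinement `𝒜1 ≼_S 𝒜2` of APTAs: strong refinement of the region APAs. -/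
def APTA.StrongRef {L1 L2 A X AP : Type} (𝒜1 : APTA L1 A X AP) (𝒜2 : APTA L2 A X AP) : Prop :=
  RAPA.StrongRef 𝒜1.region 𝒜2.region

/-! ### Consistency and pruning -/

/-- A location is consistent if its admissible labeling is nonempty and
all must-edges from it have satisfiable constraints. -/
def APTA.ConsistentLoc {L A X AP : Type} (𝒜 : APTA L A X AP) (l : L) : Prop :=
  𝒜.V l ≠ ∅ ∧ ∀ g a φ, 𝒜.T l g a φ = B3.must → φ.Nonempty

/-- Restricting a constraint to distributions that avoid inconsistent
locations. -/
def APTA.pruneConstraint {L A X AP : Type} (𝒜 : APTA L A X AP)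
    (φ : Set (PMF (Set X × L))) : Set (PMF (Set X × L)) :=
  {μ ∈ φ | ∀ Y l', ¬ 𝒜.ConsistentLoc l' → μ (Y, l') = 0}

/-- The pruning operator `β`. -/
def APTA.prune {L A X AP : Type} (𝒜 : APTA L A X AP) : APTA L A X AP where
  init := 𝒜.init
  V := fun l => if 𝒜.ConsistentLoc l then 𝒜.V l else ∅
  T := fun l g a φ' =>
    if 𝒜.ConsistentLoc l ∧ ∃ φ, 𝒜.T l g a φ = B3.must ∧ φ' = 𝒜.pruneConstraint φ
    then B3.must
    else if 𝒜.ConsistentLoc l ∧ ∃ φ, 𝒜.T l g a φ = B3.may ∧ φ' = 𝒜.pruneConstraint φ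
    then B3.may
    else B3.bot

/-- `β*`: the fixpoint of `β`, reached after finitely many iterations
(at most `|L| + 1`). -/
def APTA.pruneStar {L A X AP : Type} [Fintype L] (𝒜 : APTA L A X AP) : APTA L A X AP :=
  (fun B : APTA L A X AP => B.prune)^[Fintype.card L + 1] 𝒜

/-! ### Time divergence -/

/-- Infinite paths of a PTA. -/
structure PTA.InfPath {L A X AP : Type} (M : PTA L A X AP) where
  loc : ℕ → L
  val : ℕ → Val X
  del : ℕ → ℝ≥0
  init_loc : loc 0 = M.init
  init_val : val 0 = valZero X
  step : ∀ n, ∃ g a μ Y, M.T (loc n) g a μ ∧ valShift (val n) (del n) ∈ g ∧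
    μ (Y, loc (n + 1)) ≠ 0 ∧ val (n + 1) = valReset (valShift (val n) (del n)) Y

/-- Strict divergence: time diverges along every infinite path. -/
def PTA.StrictDivergent {L A X AP : Type} (M : PTA L A X AP) : Prop :=
  ∀ π : M.InfPath, ∀ c : ℝ≥0, ∃ n, c < ∑ i ∈ Finset.range n, π.del i

/-- Schedulers: given the history (configurations and delays) and the
current configuration, choose a delay and a probabilistic edge. -/
def Sched (L A X : Type) :=
  List ((L × Val X) × ℝ≥0) → (L × Val X) → ℝ≥0 × Guard X × A × PMF (Set X × L)

/-- A scheduler is valid if it always chooses an enabled edge of `M`. -/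
def ValidSched {L A X AP : Type} (M : PTA L A X AP) (σ : Sched L A X) : Prop :=
  ∀ h c, M.T c.1 (σ h c).2.1 (σ h c).2.2.1 (σ h c).2.2.2 ∧
    valShift c.2 (σ h c).1 ∈ (σ h c).2.1

/-- One scheduler step. -/
def schedStep {L A X : Type} (σ : Sched L A X)
    (x : List ((L × Val X) × ℝ≥0) × (L × Val X)) :
    PMF (List ((L × Val X) × ℝ≥0) × (L × Val X)) :=
  ((σ x.1 x.2).2.2.2).map fun p =>
    (x.1 ++ [(x.2, (σ x.1 x.2).1)], (p.2, valReset (valShift x.2.2 (σ x.1 x.2).1) p.1))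

/-- The distribution over histories after `n` scheduler steps. -/
def runPMF {L A X AP : Type} (M : PTA L A X AP) (σ : Sched L A X) :
    ℕ → PMF (List ((L × Val X) × ℝ≥0) × (L × Val X))
  | 0 => PMF.pure ([], (M.init, valZero X))
  | n + 1 => (runPMF M σ n).bind (schedStep σ)

/-- Total time elapsed along a history. -/
def elapsed {L X : Type} (h : List ((L × Val X) × ℝ≥0)) : ℝ≥0 :=
  (h.map Prod.snd).sum

/-- Probabilistic divergence: under every (valid) scheduler, time
diverges with probability 1; equivalently, for every bound `c` the
probability that at most `c` time units have elapsed after `n` steps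
tends to `0`. -/
def PTA.ProbDivergent {L A X AP : Type} (M : PTA L A X AP) : Prop :=
  ∀ σ : Sched L A X, ValidSched M σ → ∀ c : ℝ≥0,
    Filter.Tendsto (fun n => (runPMF M σ n).toOuterMeasure {x | elapsed x.1 ≤ c})
      Filter.atTop (nhds 0)

/-- Sd-thorough refinement: inclusion of the sets of strict divergent
implementations. -/
def APTA.ThoroughSd {L1 L2 A X AP : Type} (𝒜1 : APTA L1 A X AP) (𝒜2 : APTA L2 A X AP) : Prop :=
  ∀ (L' : Type) (M : PTA L' A X AP),
    (APTA.Implements M 𝒜1 ∧ M.StrictDivergent) → (APTA.Implements M 𝒜2 ∧ M.StrictDivergent)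

/-- Pd-thorough refinement: inclusion of the sets of probabilistic
divergent implementations. -/
def APTA.ThoroughPd {L1 L2 A X AP : Type} (𝒜1 : APTA L1 A X AP) (𝒜2 : APTA L2 A X AP) : Prop :=
  ∀ (L' : Type) (M : PTA L' A X AP),
    (APTA.Implements M 𝒜1 ∧ M.ProbDivergent) → (APTA.Implements M 𝒜2 ∧ M.ProbDivergent)

/-! ### PTAs as APTAs, and probabilistic time-abstracting bisimulation -/

/-- A PTA viewed as an APTA: only must-edges, point-valued labelings,
constraints with singleton satisfaction sets. -/
def PTA.toAPTA {L A X AP : Type} (M : PTA L A X AP) : APTA L A X AP where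
  init := M.init
  V := fun l => {M.V l}
  T := fun l g a φ => if ∃ μ, M.T l g a μ ∧ φ = {μ} then B3.must else B3.bot

/-- Disjoint union of two PTAs. -/
def PTA.sum {L1 L2 A X AP : Type} (M1 : PTA L1 A X AP) (M2 : PTA L2 A X AP) :
    PTA (L1 ⊕ L2) A X AP where
  init := Sum.inl M1.init
  V := Sum.elim M1.V M2.V
  T := fun l g a μ =>
    (∃ l1 μ1, l = Sum.inl l1 ∧ M1.T l1 g a μ1 ∧ μ = μ1.map (Prod.map id Sum.inl)) ∨
    (∃ l2 μ2, l = Sum.inr l2 ∧ M2.T l2 g a μ2 ∧ μ = μ2.map (Prod.map id Sum.inr))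

/-- A set of configurations is closed under an equivalence. -/
def EClosed {C : Type} (E : C → C → Prop) (s : Set C) : Prop :=
  ∀ x y, E x y → (x ∈ s ↔ y ∈ s)

/-- Probabilistic time-abstracting bisimulations on the configurations
of a PTA. -/
def PTA.IsBisim {L A X AP : Type} (M : PTA L A X AP)
    (E : (L × Val X) → (L × Val X) → Prop) : Prop :=
  Equivalence E ∧
  ∀ c c', E c c' →
    (M.V c.1 = M.V c'.1 ∧
     ∀ (g : Guard X) (a : A) (μ : PMF (Set X × L)) (t : ℝ≥0),
       M.T c.1 g a μ → valShift c.2 t ∈ g →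
       ∃ (g' : Guard X) (μ' : PMF (Set X × L)) (t' : ℝ≥0),
         M.T c'.1 g' a μ' ∧ valShift c'.2 t' ∈ g' ∧
         ∀ s : Set (L × Val X), EClosed E s →
           ((μ.map fun p => (p.2, valReset (valShift c.2 t) p.1)).toOuterMeasure s =
            (μ'.map fun p => (p.2, valReset (valShift c'.2 t') p.1)).toOuterMeasure s))

/-- `M1 ∼ M2`: probabilistic time-abstracting bisimilarity. -/
def PTA.Bisimilar {L1 L2 A X AP : Type} (M1 : PTA L1 A X AP) (M2 : PTA L2 A X AP) : Prop :=
  ∃ E, (M1.sum M2).IsBisim E ∧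
    E (Sum.inl M1.init, valZero X) (Sum.inr M2.init, valZero X)

/-! ### Determinism -/

/-- Action-determinism: transitions of a reachable region state on the
same action with different constraints have disjoint regions. -/
def APTA.ActionDet {L A X AP : Type} (𝒜 : APTA L A X AP) : Prop :=
  ∀ s v1 v2 a φ1 φ2, 𝒜.region.T s v1 a φ1 ≠ B3.bot → 𝒜.region.T s v2 a φ2 ≠ B3.bot →
    φ1 ≠ φ2 → v1 ≠ v2

/-- AP-determinism. -/
def APTA.APDet {L A X AP : Type} (𝒜 : APTA L A X AP) : Prop :=
  ∀ s v a φ, 𝒜.region.T s v a φ ≠ B3.bot →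
    ∀ μ' ∈ φ, ∀ μ'' ∈ φ, ∀ (Y' : Set X) s' (Y'' : Set X) s'', s' ≠ s'' →
      μ' (Y', s') ≠ 0 → μ'' (Y'', s'') ≠ 0 → 𝒜.region.V s' ∩ 𝒜.region.V s'' = ∅

def APTA.Deterministic {L A X AP : Type} (𝒜 : APTA L A X AP) : Prop :=
  𝒜.ActionDet ∧ 𝒜.APDet

/-! ### Abstraction for APTAs -/

/-- The common guard `g(l̃, a)` of the must-edges of all concretizations
of `l̃`. -/
def APTA.commonGuard {L Lt A X AP : Type} (𝒜 : APTA L A X AP) (α : L → Lt)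
    (lt : Lt) (a : A) : Guard X :=
  if ∀ l, α l = lt → ∃ g φ, 𝒜.T l g a φ = B3.must
  then ⋂₀ {g | ∃ l, α l = lt ∧ ∃ φ, 𝒜.T l g a φ = B3.must}
  else ∅

/-- The pre-processing `𝒫_α`: every must-edge is split along the common
guard and its computed negation. -/
def APTA.preprocess {L Lt A X AP : Type} (𝒜 : APTA L A X AP) (α : L → Lt) :
    APTA L A X AP where
  init := 𝒜.init
  V := 𝒜.V
  T := fun l g a φ =>
    if ∃ g₀, 𝒜.T l g₀ a φ = B3.must ∧
        (g = 𝒜.commonGuard α (α l) a ∨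
         ∃ g' ∈ Guard.negSet (𝒜.commonGuard α (α l) a), g = g₀ ∩ g')
    then B3.must
    else if 𝒜.T l g a φ = B3.may then B3.may
    else B3.bot

/-- APTA abstraction (applied to a pre-processed APTA). -/
def APTA.abstr {L Lt A X AP : Type} (𝒜 : APTA L A X AP) (α : L → Lt) :
    APTA Lt A X AP where
  init := α 𝒜.init
  V := fun lt => {P | ∃ l, α l = lt ∧ P ∈ 𝒜.V l}
  T := fun lt g a φt =>
    if g = 𝒜.commonGuard α lt a ∧
        φt = (fun μ => μ.map (Prod.map id α)) ''
          ⋃₀ {φ | ∃ l, α l = lt ∧ 𝒜.T l g a φ = B3.must}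
    then B3.must
    else if g ≠ 𝒜.commonGuard α lt a ∧ (∃ l φ, α l = lt ∧ 𝒜.T l g a φ ≠ B3.bot) ∧
        φt = (fun μ => μ.map (Prod.map id α)) ''
          ⋃₀ {φ | ∃ l, α l = lt ∧ 𝒜.T l g a φ ≠ B3.bot}
    then B3.may
    else B3.bot

/-- Pre-processing at the APA level. Since every transition of a region
APA is guarded by a single region, guard splitting is trivial there. -/
def RAPA.preprocess {S St A X AP : Type} (N : RAPA S A X AP) (_α : S → St) :
    RAPA S A X AP := N

/-- APA abstraction (cf. DKLLPSW11): must if all concretizations have a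
must-transition with the given label, may if some has a non-⊥ one. -/
def RAPA.abstr {S St A X AP : Type} (N : RAPA S A X AP) (α : S → St) :
    RAPA St A X AP where
  init := α N.init
  V := fun st => {P | ∃ s, α s = st ∧ P ∈ N.V s}
  T := fun st v a φt =>
    if (∀ s, α s = st → ∃ φ, N.T s v a φ = B3.must) ∧
        φt = (fun μ => μ.map (Prod.map id α)) ''
          ⋃₀ {φ | ∃ s, α s = st ∧ N.T s v a φ = B3.must}
    then B3.must
    else if ¬ (∀ s, α s = st → ∃ φ, N.T s v a φ = B3.must) ∧
        (∃ s φ, α s = st ∧ N.T s v a φ ≠ B3.bot) ∧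
        φt = (fun μ => μ.map (Prod.map id α)) ''
          ⋃₀ {φ | ∃ s, α s = st ∧ N.T s v a φ ≠ B3.bot}
    then B3.may
    else B3.bot

/-! ### Abstract probabilistic event-clock automata -/

/-- Abstract probabilistic event-clock automata: one clock `x_a` per
action `a` (so the clock set is identified with the action set `A`),
and probability constraints directly over locations. -/
structure APECA (L A AP : Type) where
  V : L → Set (Set AP)
  T : L → Guard A → A → Set (PMF L) → B3
  init : L

/-- Completeness of the edge function: for every location and action the
guards of the non-⊥ edges cover `true`. -/
def APECA.Complete {L A AP : Type} (E : APECA L A AP) : Prop :=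
  ∀ l a (v : Val A), ∃ g φ, E.T l g a φ ≠ B3.bot ∧ v ∈ g

/-- An APECA as an APTA: the occurrence of `a` resets exactly the clock
`x_a`. -/
def APECA.toAPTA {L A AP : Type} (E : APECA L A AP) : APTA L A A AP where
  init := E.init
  V := E.V
  T := fun l g a φh =>
    if ∃ φ, E.T l g a φ = B3.must ∧
        φh = (fun μ => μ.map fun l' => (({a} : Set A), l')) '' φ
    then B3.must
    else if ∃ φ, E.T l g a φ = B3.may ∧
        φh = (fun μ => μ.map fun l' => (({a} : Set A), l')) '' φ
    then B3.may
    else B3.bot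

/-- The region APA of an APECA. -/
def APECA.region {L A AP : Type} (E : APECA L A AP) : RAPA (L × Val A) A A AP :=
  E.toAPTA.region

/-- Weak refinement of APECAs: weak APA refinement of the region APAs. -/
def APECA.WeakRef {L1 L2 A AP : Type} (E1 : APECA L1 A AP) (E2 : APECA L2 A AP) : Prop :=
  RAPA.WeakRef E1.region E2.region

/-- Action-determinism for APECAs. -/
def APECA.ActionDet {L A AP : Type} (E : APECA L A AP) : Prop :=
  ∀ s v1 v2 a φ1 φ2, E.region.T s v1 a φ1 ≠ B3.bot → E.region.T s v2 a φ2 ≠ B3.bot →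
    φ1 ≠ φ2 → v1 ≠ v2

/-- Consistency: existence of at least one implementation. -/
def APECA.Consistent {L A AP : Type} (E : APECA L A AP) : Prop :=
  ∃ (L' : Type) (M : PTA L' A A AP), APTA.Implements M E.toAPTA

/-- Implementation of an APECA. -/
def APECA.Implements {L' L A AP : Type} (M : PTA L' A A AP) (E : APECA L A AP) : Prop :=
  APTA.Implements M E.toAPTA

/-- Disjointness of the atomic-proposition alphabets of two APECAs. -/
def APDisjoint {L1 L2 A AP : Type} (E1 : APECA L1 A AP) (E2 : APECA L2 A AP) : Prop :=
  ∀ l1 l2 P1 P2, P1 ∈ E1.V l1 → P2 ∈ E2.V l2 → P1 ∩ P2 = ∅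

/-! ### Conjunction -/

/-- The conjunction `φ∧` of two constraints: a distribution satisfies it
iff its marginals satisfy the component constraints. -/
def conjConstraint {L1 L2 : Type} (φ1 : Set (PMF L1)) (φ2 : Set (PMF L2)) :
    Set (PMF (L1 × L2)) :=
  {μ | μ.map Prod.fst ∈ φ1 ∧ μ.map Prod.snd ∈ φ2}

/-- Conjunction of APECAs. -/
def APECA.conj {L1 L2 A AP : Type} (E1 : APECA L1 A AP) (E2 : APECA L2 A AP) :
    APECA (L1 × L2) A AP where
  init := (E1.init, E2.init)
  V := fun p => E1.V p.1 ∩ E2.V p.2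
  T := fun p g a φ =>
    if ∃ g1 g2 φ1 φ2, E1.T p.1 g1 a φ1 ≠ B3.bot ∧ E2.T p.2 g2 a φ2 ≠ B3.bot ∧
        g = g1 ∩ g2 ∧ φ = conjConstraint φ1 φ2 ∧
        (E1.T p.1 g1 a φ1 = B3.must ∨ E2.T p.2 g2 a φ2 = B3.must)
    then B3.must
    else if ∃ g1 g2 φ1 φ2, E1.T p.1 g1 a φ1 ≠ B3.bot ∧ E2.T p.2 g2 a φ2 ≠ B3.bot ∧
        g = g1 ∩ g2 ∧ φ = conjConstraint φ1 φ2
    then B3.may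
    else B3.bot

/-- Conjunction of constraints at the region level (with reset sets). -/
def conjConstraintR {X S1 S2 : Type} (φ1 : Set (PMF (Set X × S1)))
    (φ2 : Set (PMF (Set X × S2))) : Set (PMF (Set X × (S1 × S2))) :=
  {μ | μ.map (fun p => (p.1, p.2.1)) ∈ φ1 ∧ μ.map (fun p => (p.1, p.2.2)) ∈ φ2}

/-- Conjunction of APAs (region level). -/
def RAPA.conj {S1 S2 A X AP : Type} (N1 : RAPA S1 A X AP) (N2 : RAPA S2 A X AP) :
    RAPA (S1 × S2) A X AP where
  init := (N1.init, N2.init)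
  V := fun p => N1.V p.1 ∩ N2.V p.2
  T := fun p v a φ =>
    if ∃ φ1 φ2, N1.T p.1 v a φ1 ≠ B3.bot ∧ N2.T p.2 v a φ2 ≠ B3.bot ∧
        φ = conjConstraintR φ1 φ2 ∧
        (N1.T p.1 v a φ1 = B3.must ∨ N2.T p.2 v a φ2 = B3.must)
    then B3.must
    else if ∃ φ1 φ2, N1.T p.1 v a φ1 ≠ B3.bot ∧ N2.T p.2 v a φ2 ≠ B3.bot ∧
        φ = conjConstraintR φ1 φ2
    then B3.may
    else B3.bot

/-! ### Pruning for APECAs -/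

def APECA.ConsistentLoc {L A AP : Type} (E : APECA L A AP) (l : L) : Prop :=
  E.V l ≠ ∅ ∧ ∀ g a φ, E.T l g a φ = B3.must → φ.Nonempty

def APECA.pruneConstraint {L A AP : Type} (E : APECA L A AP) (φ : Set (PMF L)) :
    Set (PMF L) :=
  {μ ∈ φ | ∀ l', ¬ E.ConsistentLoc l' → μ l' = 0}

def APECA.prune {L A AP : Type} (E : APECA L A AP) : APECA L A AP where
  init := E.init
  V := fun l => if E.ConsistentLoc l then E.V l else ∅
  T := fun l g a φ' =>
    if E.ConsistentLoc l ∧ ∃ φ, E.T l g a φ = B3.must ∧ φ' = E.pruneConstraint φ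
    then B3.must
    else if E.ConsistentLoc l ∧ ∃ φ, E.T l g a φ = B3.may ∧ φ' = E.pruneConstraint φ
    then B3.may
    else B3.bot

def APECA.pruneStar {L A AP : Type} [Fintype L] (E : APECA L A AP) : APECA L A AP :=
  (fun B : APECA L A AP => B.prune)^[Fintype.card L + 1] E

/-! ### Parallel composition -/

/-- The parallel constraint `φ∥`: product distributions of satisfying
pairs. -/
def parConstraint {L1 L2 : Type} (φ1 : Set (PMF L1)) (φ2 : Set (PMF L2)) :
    Set (PMF (L1 × L2)) :=
  {μ | ∃ μ1 ∈ φ1, ∃ μ2 ∈ φ2, ∀ k1 k2, μ (k1, k2) = μ1 k1 * μ2 k2}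

/-- Parallel composition of APECAs (over the same action set). -/
def APECA.par {L1 L2 A AP : Type} (E1 : APECA L1 A AP) (E2 : APECA L2 A AP) :
    APECA (L1 × L2) A AP where
  init := (E1.init, E2.init)
  V := fun p => {Q | ∃ P1 ∈ E1.V p.1, ∃ P2 ∈ E2.V p.2, Q = P1 ∪ P2}
  T := fun p g a φ =>
    if ∃ g1 g2 φ1 φ2, E1.T p.1 g1 a φ1 = B3.must ∧ E2.T p.2 g2 a φ2 = B3.must ∧
        g = g1 ∩ g2 ∧ φ = parConstraint φ1 φ2
    then B3.must
    else if ∃ g1 g2 φ1 φ2, E1.T p.1 g1 a φ1 ≠ B3.bot ∧ E2.T p.2 g2 a φ2 ≠ B3.bot ∧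
        g = g1 ∩ g2 ∧ φ = parConstraint φ1 φ2
    then B3.may
    else B3.bot

/-- Parallel constraint at the region level: products, with resets
combined by union. -/
def parConstraintR {X S1 S2 : Type} (φ1 : Set (PMF (Set X × S1)))
    (φ2 : Set (PMF (Set X × S2))) : Set (PMF (Set X × (S1 × S2))) :=
  {μ | ∃ μ1 ∈ φ1, ∃ μ2 ∈ φ2,
    μ = μ1.bind fun p => μ2.map fun q => (p.1 ∪ q.1, (p.2, q.2))}

/-- Parallel composition of APAs (region level). -/
def RAPA.par {S1 S2 A X AP : Type} (N1 : RAPA S1 A X AP) (N2 : RAPA S2 A X AP) :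
    RAPA (S1 × S2) A X AP where
  init := (N1.init, N2.init)
  V := fun p => {Q | ∃ P1 ∈ N1.V p.1, ∃ P2 ∈ N2.V p.2, Q = P1 ∪ P2}
  T := fun p v a φ =>
    if ∃ φ1 φ2, N1.T p.1 v a φ1 = B3.must ∧ N2.T p.2 v a φ2 = B3.must ∧
        φ = parConstraintR φ1 φ2
    then B3.must
    else if ∃ φ1 φ2, N1.T p.1 v a φ1 ≠ B3.bot ∧ N2.T p.2 v a φ2 ≠ B3.bot ∧
        φ = parConstraintR φ1 φ2
    then B3.may
    else B3.bot

/-! ### Abstraction for APECAs -/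

def APECA.commonGuard {L Lt A AP : Type} (E : APECA L A AP) (α : L → Lt)
    (lt : Lt) (a : A) : Guard A :=
  if ∀ l, α l = lt → ∃ g φ, E.T l g a φ = B3.must
  then ⋂₀ {g | ∃ l, α l = lt ∧ ∃ φ, E.T l g a φ = B3.must}
  else ∅

def APECA.preprocess {L Lt A AP : Type} (E : APECA L A AP) (α : L → Lt) :
    APECA L A AP where
  init := E.init
  V := E.V
  T := fun l g a φ =>
    if ∃ g₀, E.T l g₀ a φ = B3.must ∧
        (g = E.commonGuard α (α l) a ∨
         ∃ g' ∈ Guard.negSet (E.commonGuard α (α l) a), g = g₀ ∩ g')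
    then B3.must
    else if E.T l g a φ = B3.may then B3.may
    else B3.bot

def APECA.abstr {L Lt A AP : Type} (E : APECA L A AP) (α : L → Lt) :
    APECA Lt A AP where
  init := α E.init
  V := fun lt => {P | ∃ l, α l = lt ∧ P ∈ E.V l}
  T := fun lt g a φt =>
    if g = E.commonGuard α lt a ∧
        φt = (fun μ => μ.map α) '' ⋃₀ {φ | ∃ l, α l = lt ∧ E.T l g a φ = B3.must}
    then B3.must
    else if g ≠ E.commonGuard α lt a ∧ (∃ l φ, α l = lt ∧ E.T l g a φ ≠ B3.bot) ∧
        φt = (fun μ => μ.map α) '' ⋃₀ {φ | ∃ l, α l = lt ∧ E.T l g a φ ≠ B3.bot}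
    then B3.may
    else B3.bot

end

noncomputable section AbstractionProof

open scoped Classical

/-- The common guard of the pre-processed APTA is always empty: the set of
must-guards contains both the original common guard `cg` and some `g₀ ∩ cgᶜ`. -/
lemma pre_commonGuard_empty {L Lt A X AP : Type} (𝒜 : APTA L A X AP) (α : L → Lt)
    (hα : Function.Surjective α) (lt : Lt) (a : A) :
    (𝒜.preprocess α).commonGuard α lt a = ∅ := by
  unfold APTA.commonGuard
  split_ifs with h
  · obtain ⟨l0, hl0⟩ := hα lt
    obtain ⟨gp, φ, hmust⟩ := h l0 hl0
    have hex : ∃ g₀, 𝒜.T l0 g₀ a φ = B3.must := by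
      unfold APTA.preprocess at hmust
      simp only at hmust
      split_ifs at hmust with h1 h2
      · obtain ⟨g₀, hg₀, _⟩ := h1; exact ⟨g₀, hg₀⟩
    obtain ⟨g₀, hg₀⟩ := hex
    have h1 : 𝒜.commonGuard α lt a ∈
        {g | ∃ l, α l = lt ∧ ∃ φ, (𝒜.preprocess α).T l g a φ = B3.must} := by
      refine ⟨l0, hl0, φ, ?_⟩
      unfold APTA.preprocess
      simp only
      rw [if_pos ⟨g₀, hg₀, Or.inl (by rw [hl0])⟩]
    have h2 : g₀ ∩ (𝒜.commonGuard α lt a)ᶜ ∈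
        {g | ∃ l, α l = lt ∧ ∃ φ, (𝒜.preprocess α).T l g a φ = B3.must} := by
      refine ⟨l0, hl0, φ, ?_⟩
      unfold APTA.preprocess
      simp only
      rw [if_pos ⟨g₀, hg₀, Or.inr ⟨(𝒜.commonGuard α lt a)ᶜ,
        by simp [Guard.negSet, hl0], rfl⟩⟩]
    apply Set.eq_empty_iff_forall_notMem.2
    intro v hv
    have hv1 := Set.mem_sInter.1 hv _ h1
    have hv2 := Set.mem_sInter.1 hv _ h2
    exact hv2.2 hv1
  · rfl

/-- No must transitions in the region APA of the abstraction. -/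
lemma abstr_region_no_must {L Lt A X AP : Type} (𝒜 : APTA L A X AP) (α : L → Lt)
    (hα : Function.Surjective α) (s : Lt × Val X) (v : Val X) (a : A)
    (φ : Set (PMF (Set X × (Lt × Val X)))) :
    ((𝒜.preprocess α).abstr α).region.T s v a φ ≠ B3.must := by
  unfold APTA.region
  simp only
  split_ifs with hr
  · unfold APTA.regionPre
    simp only
    split_ifs with h1 h2
    · exfalso
      obtain ⟨g, φ0, t, hmust, _, hvg, _⟩ := h1
      unfold APTA.abstr at hmust
      simp only at hmust
      split_ifs at hmust with hc1 hc2
      · rw [hc1.1, pre_commonGuard_empty 𝒜 α hα] at hvg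
        exact hvg
    · exact (by decide : B3.may ≠ B3.must)
    · exact (by decide : B3.bot ≠ B3.must)
  · exact (by decide : B3.bot ≠ B3.must)

/-- One-step transfer: every non-⊥ transition of the region of `𝒜` is matched
by a non-⊥ transition of the region of the abstraction, into which the
α-images of all satisfying distributions fit. -/
lemma step_transfer {L Lt A X AP : Type} (𝒜 : APTA L A X AP) (α : L → Lt)
    (hα : Function.Surjective α) (s : L × Val X) (v : Val X) (a : A)
    (φ : Set (PMF (Set X × (L × Val X))))
    (hT : 𝒜.regionPre.T s v a φ ≠ B3.bot) :
    ∃ Φ', ((𝒜.preprocess α).abstr α).regionPre.T (α s.1, s.2) v a Φ' ≠ B3.bot ∧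
      ∀ μ ∈ φ, μ.map (fun p => (p.1, (α p.2.1, p.2.2))) ∈ Φ' := by
  have hC : ∃ g φ0 t, 𝒜.T s.1 g a φ0 ≠ B3.bot ∧ v = valShift s.2 t ∧ v ∈ g ∧
      φ = liftConstraint v φ0 := by
    unfold APTA.regionPre at hT
    simp only at hT
    split_ifs at hT with h1 h2
    · obtain ⟨g, φ0, t, hm, hv, hvg, hφ⟩ := h1
      exact ⟨g, φ0, t, by rw [hm]; decide, hv, hvg, hφ⟩
    · exact h2
    · exact absurd rfl hT
  obtain ⟨g, φ0, t, hne, hv, hvg, rfl⟩ := hC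
  -- find a guard of the pre-processed automaton containing `v`
  have key : ∃ g', v ∈ g' ∧ (𝒜.preprocess α).T s.1 g' a φ0 ≠ B3.bot := by
    by_cases hm : 𝒜.T s.1 g a φ0 = B3.must
    · by_cases hcg : v ∈ 𝒜.commonGuard α (α s.1) a
      · refine ⟨𝒜.commonGuard α (α s.1) a, hcg, ?_⟩
        unfold APTA.preprocess
        simp only
        split_ifs with h1 h2
        · decide
        · decide
        · exact absurd ⟨g, hm, Or.inl (by trivial)⟩ h1
      · refine ⟨g ∩ (𝒜.commonGuard α (α s.1) a)ᶜ, ⟨hvg, hcg⟩, ?_⟩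
        unfold APTA.preprocess
        simp only
        split_ifs with h1 h2
        · decide
        · decide
        · exact absurd ⟨g, hm, Or.inr ⟨(𝒜.commonGuard α (α s.1) a)ᶜ,
            by simp [Guard.negSet], by trivial⟩⟩ h1
    · refine ⟨g, hvg, ?_⟩
      unfold APTA.preprocess
      simp only
      split_ifs with h1 h2
      · decide
      · decide
      · cases hB : 𝒜.T s.1 g a φ0
        · exact absurd hB hne
        · exact absurd hB h2
        · exact absurd hB hm
  obtain ⟨g', hvg', hP⟩ := key
  set Φ : Set (PMF (Set X × Lt)) := (fun μ => μ.map (Prod.map id α)) ''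
      ⋃₀ {φ | ∃ l, α l = α s.1 ∧ (𝒜.preprocess α).T l g' a φ ≠ B3.bot} with hΦdef
  have hB : ((𝒜.preprocess α).abstr α).T (α s.1) g' a Φ = B3.may := by
    unfold APTA.abstr
    simp only
    have hne' : g' ≠ (𝒜.preprocess α).commonGuard α (α s.1) a := by
      rw [pre_commonGuard_empty 𝒜 α hα]
      intro heq
      rw [heq] at hvg'
      exact hvg'
    split_ifs with h1 h2
    · exact absurd h1.1 hne'
    · rfl
    · exact absurd ⟨hne', ⟨s.1, φ0, rfl, hP⟩, by trivial⟩ h2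
  refine ⟨liftConstraint v Φ, ?_, ?_⟩
  · unfold APTA.regionPre
    simp only
    split_ifs with h1 h2
    · decide
    · decide
    · exact absurd ⟨g', Φ, t, by rw [hB]; decide, hv, hvg', rfl⟩ h2
  · rintro μ ⟨ν, hν, rfl⟩
    have h1 : ν.map (Prod.map id α) ∈ Φ :=
      Set.mem_image_of_mem _ (Set.mem_sUnion.2 ⟨φ0, ⟨s.1, rfl, hP⟩, hν⟩)
    refine ⟨ν.map (Prod.map id α), h1, ?_⟩
    show (ν.map (Prod.map id α)).map
        (fun p : Set X × Lt => (p.1, (p.2, valReset v p.1))) = _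
    rw [PMF.map_comp, PMF.map_comp]
    rfl

/-- Reachability transfers from the region of `𝒜` to the region of the
abstraction. -/
lemma reach_transfer {L Lt A X AP : Type} (𝒜 : APTA L A X AP) (α : L → Lt)
    (hα : Function.Surjective α) (s : L × Val X) (h : 𝒜.regionPre.Reach s) :
    ((𝒜.preprocess α).abstr α).regionPre.Reach (α s.1, s.2) := by
  induction h with
  | init => exact RAPA.Reach.init
  | @step s v a φ μ Y s' hr hT hμ hne ih =>
    obtain ⟨Φ', hΦne, hmem⟩ := step_transfer 𝒜 α hα s v a φ hT
    have hle : μ (Y, s') ≤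
        (μ.map (fun p => (p.1, (α p.2.1, p.2.2)))) (Y, (α s'.1, s'.2)) := by
      rw [PMF.map_apply]
      refine le_trans ?_ (ENNReal.le_tsum (Y, s'))
      rw [if_pos rfl]
    exact RAPA.Reach.step ih hΦne (hmem μ hμ)
      (fun h0 => hne (le_zero_iff.1 (h0 ▸ hle)))

/-- The canonical lifting along a state map. -/
lemma distLift_map {X S S' : Type} (R : S → S' → Prop) (k : S → S')
    (hk : ∀ s, R s (k s)) (μ : PMF (Set X × S)) :
    distLift R μ (μ.map fun p => (p.1, k p.2)) := by
  refine ⟨fun p q => if q = (p.1, k p.2) then 1 else 0, ?_, ?_, ?_⟩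
  · intro p _
    exact tsum_ite_eq _ 1
  · intro q
    rw [PMF.map_apply]
    refine tsum_congr fun p => ?_
    by_cases hq : q = (p.1, k p.2) <;> simp [hq]
  · intro p q hδ
    by_cases hq : q = (p.1, k p.2)
    · subst hq; exact ⟨rfl, hk _⟩
    · exact absurd (by simp [hq]) hδ

end AbstractionProof

/-- Proposition 5.  Any APTA weakly refines its
abstraction: `𝒜 ≼_W α(𝒫_α(𝒜))`. -/
theorem apta_weakref_abstraction {L Lt A X AP : Type}
    (𝒜 : APTA L A X AP) (α : L → Lt) (hα : Function.Surjective α) :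
    APTA.WeakRef 𝒜 ((𝒜.preprocess α).abstr α) := by
  refine ⟨fun s t => t = (α s.1, s.2), ?_, rfl⟩
  intro s1 s2 hR
  subst hR
  refine ⟨?_, ?_, ?_⟩
  · intro v a φ2 hmust
    exact absurd hmust (abstr_region_no_must 𝒜 α hα _ v a φ2)
  · intro v a φ1 h1
    have hreach : 𝒜.regionPre.Reach s1 ∧ 𝒜.regionPre.T s1 v a φ1 ≠ B3.bot := by
      unfold APTA.region at h1
      simp only at h1
      split_ifs at h1 with h
      · exact ⟨h, h1⟩
      · exact absurd rfl h1
    obtain ⟨Φ', hΦ, hmem⟩ := step_transfer 𝒜 α hα s1 v a φ1 hreach.2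
    refine ⟨Φ', ?_, ?_⟩
    · unfold APTA.region
      simp only
      rw [if_pos (reach_transfer 𝒜 α hα s1 hreach.1)]
      exact hΦ
    · intro μ1 hμ1
      exact ⟨μ1.map _, hmem μ1 hμ1,
        distLift_map (fun (s : L × Val X) (t : Lt × Val X) => t = (α s.1, s.2))
          (fun s : L × Val X => (α s.1, s.2)) (fun _ => rfl) μ1⟩
  · intro Q hQ
    exact ⟨s1.1, rfl, hQ⟩
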